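/- Let Γ be a distance-regular graph with diameter D and no parallelogram of length i+1 for some 1 ≤ i ≤ D−1. Then for any vertex x and any adjacent vertices z, z′ ∈ Γ_i(x), one has B(x,z) = B(x,z′). -/
import Mathlib


/-!
Common definitions: distance-regular graphs (via an intersection-number function `p`),
classical parameters, and the sets `B(x,y)`, `A(x,y)`, `C(x,y)`.
The distance `∂` is `SimpleGraph.dist`.
-/

variable {V : Type*}

/-- `Γ` is distance-regular with intersection numbers `p h i j = p^h_{ij}`
(for indices up to the diameter `D`). -/
def SimpleGraph.IsDistRegularWith (G : SimpleGraph V) (D : ℕ) (p : ℕ → ℕ → ℕ → ℕ) : Prop :=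
  ∀ h i j : ℕ, h ≤ D → i ≤ D → j ≤ D → ∀ x y : V, G.dist x y = h →
    {z : V | G.dist x z = i ∧ G.dist y z = j}.ncard = p h i j

/-- The Gaussian bracket `[i] = 1 + b + b² + ⋯ + b^{i-1}`. -/
def gaussBracket (b : ℝ) (i : ℕ) : ℝ := ∑ k ∈ Finset.range i, b ^ k

/-- A distance-regular graph with intersection numbers `p` has classical parameters
`(D, b, α, β)`: `b ∉ {0, -1}`, `c_i = [i](1 + α[i-1])` and `b_i = ([D]-[i])(β - α[i])`
for `0 ≤ i ≤ D`, where `c_i = p^i_{1,i-1}` and `b_i = p^i_{1,i+1}`. -/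
def HasClassicalParams (D : ℕ) (p : ℕ → ℕ → ℕ → ℕ) (b α β : ℝ) : Prop :=
  b ≠ 0 ∧ b ≠ -1 ∧
    (∀ i ≤ D, (p i 1 (i - 1) : ℝ) = gaussBracket b i * (1 + α * gaussBracket b (i - 1))) ∧
    (∀ i ≤ D, (p i 1 (i + 1) : ℝ) =
      (gaussBracket b D - gaussBracket b i) * (β - α * gaussBracket b i))

/-- `B(x,y) = Γ₁(x) ∩ Γ_{∂(x,y)+1}(y)`. -/
def Bset (G : SimpleGraph V) (x y : V) : Set V :=
  {v | G.dist x v = 1 ∧ G.dist y v = G.dist x y + 1}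

/-- `A(x,y) = Γ₁(x) ∩ Γ_{∂(x,y)}(y)`. -/
def Aset (G : SimpleGraph V) (x y : V) : Set V :=
  {v | G.dist x v = 1 ∧ G.dist y v = G.dist x y}

/-- `C(x,y) = Γ₁(x) ∩ Γ_{∂(x,y)-1}(y)`. -/
def Cset (G : SimpleGraph V) (x y : V) : Set V :=
  {v | G.dist x v = 1 ∧ G.dist y v = G.dist x y - 1}

/-- A parallelogram of length `ℓ`: a 4-tuple `x y z w` with `∂(x,y) = ∂(z,w) = 1`,
`∂(x,z) = ℓ`, and `∂(x,w) = ∂(y,w) = ∂(y,z) = ℓ - 1`. -/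
def IsParallelogram (G : SimpleGraph V) (ℓ : ℕ) (x y z w : V) : Prop :=
  G.dist x y = 1 ∧ G.dist z w = 1 ∧ G.dist x z = ℓ ∧
    G.dist x w = ℓ - 1 ∧ G.dist y w = ℓ - 1 ∧ G.dist y z = ℓ - 1


private lemma Bset_subset_aux [Fintype V] (G : SimpleGraph V) (hconn : G.Connected)
    (i : ℕ) (hi1 : 1 ≤ i)
    (hnp : ∀ x y z w : V, ¬ IsParallelogram G (i + 1) x y z w)
    (x z z' : V) (hz : G.dist x z = i) (hz' : G.dist x z' = i) (hadj : G.Adj z z') :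
    Bset G x z ⊆ Bset G x z' := by
  intro v hv
  obtain ⟨hv1, hv2⟩ := hv
  rw [hz] at hv2
  have hzz' : G.dist z z' = 1 := SimpleGraph.dist_eq_one_iff_adj.mpr hadj
  have hub : G.dist z' v ≤ i + 1 := by
    calc G.dist z' v ≤ G.dist z' x + G.dist x v := hconn.dist_triangle
    _ = i + 1 := by rw [SimpleGraph.dist_comm (u := z') (v := x), hz', hv1]
  have hlb : i ≤ G.dist z' v := by
    have := hconn.dist_triangle (u := z) (v := z') (w := v)
    rw [hzz', hv2] at this
    omega
  have hne : G.dist z' v ≠ i := by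
    intro h
    exact hnp v x z z' ⟨by rw [SimpleGraph.dist_comm (u := v)]; exact hv1,
      hzz', by rw [SimpleGraph.dist_comm (u := v)]; omega,
      by rw [SimpleGraph.dist_comm (u := v)]; omega, by omega, by omega⟩
  exact ⟨hv1, by rw [hz']; omega⟩

/-- Let `Γ` be a distance-regular graph with diameter `D` and no
parallelogram of length `i+1` for some `1 ≤ i ≤ D-1`. Then for any vertex `x` and any
adjacent vertices `z, z' ∈ Γ_i(x)`, one has `B(x,z) = B(x,z')`. -/
theorem Bset_eq_of_adj_of_no_parallelogram [Fintype V] (G : SimpleGraph V)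
    (hconn : G.Connected) (D : ℕ)
    (hdiam_le : ∀ x y : V, G.dist x y ≤ D) (hdiam : ∃ x y : V, G.dist x y = D)
    (p : ℕ → ℕ → ℕ → ℕ) (hdr : G.IsDistRegularWith D p)
    (i : ℕ) (hi1 : 1 ≤ i) (hiD : i ≤ D - 1)
    (hnp : ∀ x y z w : V, ¬ IsParallelogram G (i + 1) x y z w)
    (x : V) (z z' : V) (hz : G.dist x z = i) (hz' : G.dist x z' = i) (hadj : G.Adj z z') :
    Bset G x z = Bset G x z' := by
  exact le_antisymm (Bset_subset_aux G hconn i hi1 hnp x z z' hz hz' hadj)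
    (Bset_subset_aux G hconn i hi1 hnp x z' z hz' hz hadj.symm)
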